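/- Let c > 0 and G_c := diag(-1/c², 1, 1, 1). If M is a real 4×4 matrix with M G_c Mᵀ = G_c, M₀₀ ≥ 0 and det M > 0, then there exist V ∈ ℝ³ with |V| < c and Q ∈ SO(3) such that M = L_c(V,Q), where L_c(V,Q) is the standard Lorentz matrix with boost B_c(V) = Id + (γ²/(c²(γ+1))) V Vᵀ and γ = (1-|V|²/c²)^{-1/2}. Conversely every such L_c(V,Q) satisfies these three conditions. -/

import Mathlib

open Matrix

noncomputable def gammaV (c : ℝ) (V : Fin 3 → ℝ) : ℝ :=
  1 / Real.sqrt (1 - (∑ i, V i ^ 2) / c ^ 2)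

noncomputable def Bc (c : ℝ) (V : Fin 3 → ℝ) : Matrix (Fin 3) (Fin 3) ℝ :=
  1 + (gammaV c V ^ 2 / (c ^ 2 * (gammaV c V + 1))) • vecMulVec V V

noncomputable def Lc (c : ℝ) (V : Fin 3 → ℝ) (Q : Matrix (Fin 3) (Fin 3) ℝ) :
    Matrix (Fin 1 ⊕ Fin 3) (Fin 1 ⊕ Fin 3) ℝ :=
  fromBlocks (of fun _ _ => gammaV c V)
             (of fun _ j => (gammaV c V / c ^ 2) * (V ᵥ* Q) j)
             (of fun i _ => gammaV c V * V i)
             (Bc c V * Q)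

noncomputable def Gc (c : ℝ) : Matrix (Fin 1 ⊕ Fin 3) (Fin 1 ⊕ Fin 3) ℝ :=
  fromBlocks (of fun _ _ => -1 / c ^ 2) 0 0 1

/-!
If `M G_c Mᵀ = G_c`, then also `Mᵀ G_c⁻¹ M = G_c⁻¹`. Its `(0,0)` entry gives
`|w|² = c² (γ² - 1)` for the first column `(γ, w)`, so `M₀₀ ≥ 0` forces `γ ≥ 1`, and
`V := w / γ` has `|V| < c` and `γ(V) = γ`. The spatial block `A` of `M` satisfies
`A Aᵀ = 1 + (γ²/c²) V Vᵀ = B_c(V)²`, and `B_c(V)` is symmetric with determinant `γ`,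
so `Q := B_c(V)⁻¹ A` is orthogonal; the `(0,j)` entries of `Mᵀ G_c⁻¹ M = G_c⁻¹` then pin down
the first row, giving `M = L_c(V,Q)`.

Conversely `L_c(V,Q) = L_c(V,1) · diag(1,Q)`: the rotation preserves `G_c` since `Q Qᵀ = 1`,
the boost does by direct computation, and a Schur complement gives `det L_c(V,1) = 1`, so
`det L_c(V,Q) = det Q`. Since `det Q = ±1`, positivity of `det M` is exactly `det Q = 1`.
-/

lemma dotProduct_self_eq_sum_sq {n R : Type*} [Fintype n] [CommSemiring R] (v : n → R) :
    v ⬝ᵥ v = ∑ i, v i ^ 2 := by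
  simp only [dotProduct, sq]

section MatrixLemmas
variable {n R : Type*} [Fintype n] [DecidableEq n] [CommRing R]

lemma one_add_smul_vecMulVec_mul_one_add_smul_vecMulVec (a b : R) (v : n → R) :
    (1 + a • vecMulVec v v) * (1 + b • vecMulVec v v) =
      1 + (a + b + a * b * (v ⬝ᵥ v)) • vecMulVec v v := by
  simp only [add_mul, mul_add, one_mul, mul_one, smul_mul_smul_comm, vecMulVec_mul_vecMulVec,
    vecMulVec_smul]
  module

lemma det_one_add_smul_vecMulVec (a : R) (u v : n → R) :
    det (1 + a • vecMulVec u v) = 1 + a * (v ⬝ᵥ u) := by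
  rw [← smul_vecMulVec, vecMulVec_eq Unit, det_one_add_replicateCol_mul_replicateRow,
    dotProduct_smul, smul_eq_mul]

variable {K : Type*} [Field K]

lemma transpose_mul_inv_mul_eq_inv {G M : Matrix n n K} (hG : IsUnit G.det)
    (h : M * G * Mᵀ = G) : Mᵀ * G⁻¹ * M = G⁻¹ := by
  have h₁ : M * (G * Mᵀ * G⁻¹) = 1 := by
    rw [← Matrix.mul_assoc, ← Matrix.mul_assoc, h, mul_nonsing_inv _ hG]
  calc Mᵀ * G⁻¹ * M = G⁻¹ * (G * Mᵀ * G⁻¹ * M) := by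
        simp only [← Matrix.mul_assoc, nonsing_inv_mul _ hG, Matrix.one_mul]
    _ = G⁻¹ := by rw [mul_eq_one_comm.mp h₁, Matrix.mul_one]

lemma inv_mul_mul_transpose_eq_one {A B : Matrix n n K} (hB : Bᵀ = B) (hdet : IsUnit B.det)
    (h : A * Aᵀ = B * B) : B⁻¹ * A * (B⁻¹ * A)ᵀ = 1 := by
  rw [transpose_mul, transpose_nonsing_inv, hB, Matrix.mul_assoc, ← Matrix.mul_assoc A, h,
    Matrix.mul_assoc, nonsing_inv_mul_cancel_left _ _ hdet, mul_nonsing_inv _ hdet]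

lemma det_fromBlocks_of_const₁₁ {ι : Type*} [Unique ι] [Fintype ι] [DecidableEq ι] {γ : K}
    (hγ : γ ≠ 0) (u w : n → K) (D : Matrix n n K) :
    (fromBlocks (of fun _ _ => γ : Matrix ι ι K) (of fun _ j => u j) (of fun i _ => w i) D).det =
      γ * (D - γ⁻¹ • vecMulVec w u).det := by
  let _ : Invertible (of fun _ _ => γ : Matrix ι ι K) :=
    invertibleOfRightInverse _ (of fun _ _ => γ⁻¹) (by
      ext i j; simp [mul_apply, hγ, Subsingleton.elim i j, one_apply])
  rw [det_fromBlocks₁₁, det_unique, of_apply]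
  congr 3
  ext i j
  simp [mul_apply, vecMulVec_apply]
  ring

end MatrixLemmas

section Boost
variable {c : ℝ} {V : Fin 3 → ℝ}

lemma sq_pos_of_sum_sq_lt (h : ∑ i, V i ^ 2 < c ^ 2) : 0 < c ^ 2 :=
  lt_of_le_of_lt (by positivity) h

lemma ne_zero_of_sum_sq_lt (h : ∑ i, V i ^ 2 < c ^ 2) : c ≠ 0 :=
  (pow_ne_zero_iff two_ne_zero).1 (sq_pos_of_sum_sq_lt h).ne'

lemma one_sub_sum_sq_div_pos (h : ∑ i, V i ^ 2 < c ^ 2) : 0 < 1 - (∑ i, V i ^ 2) / c ^ 2 := by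
  rwa [sub_pos, div_lt_one (sq_pos_of_sum_sq_lt h)]

lemma gammaV_pos (h : ∑ i, V i ^ 2 < c ^ 2) : 0 < gammaV c V := by
  have := Real.sqrt_pos.2 (one_sub_sum_sq_div_pos h)
  unfold gammaV
  positivity

lemma gammaV_sq_mul (h : ∑ i, V i ^ 2 < c ^ 2) :
    gammaV c V ^ 2 * (1 - (∑ i, V i ^ 2) / c ^ 2) = 1 := by
  have hpos := one_sub_sum_sq_div_pos h
  rw [gammaV, div_pow, Real.sq_sqrt hpos.le, one_pow, one_div_mul_cancel hpos.ne']

lemma gammaV_sq_mul_sum_sq (h : ∑ i, V i ^ 2 < c ^ 2) :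
    gammaV c V ^ 2 * ∑ i, V i ^ 2 = c ^ 2 * (gammaV c V ^ 2 - 1) := by
  have hc := (sq_pos_of_sum_sq_lt h).ne'
  calc gammaV c V ^ 2 * ∑ i, V i ^ 2 = c ^ 2 * (gammaV c V ^ 2 * ((∑ i, V i ^ 2) / c ^ 2)) := by
        rw [mul_div_assoc', mul_div_assoc', mul_div_cancel_left₀ _ hc]
    _ = c ^ 2 * (gammaV c V ^ 2 - 1) := by linear_combination (-c ^ 2) * gammaV_sq_mul h

lemma boost_coeff_mul_sum_sq (h : ∑ i, V i ^ 2 < c ^ 2) :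
    gammaV c V ^ 2 / (c ^ 2 * (gammaV c V + 1)) * ∑ i, V i ^ 2 = gammaV c V - 1 := by
  have hc := (sq_pos_of_sum_sq_lt h).ne'
  have hγ : gammaV c V + 1 ≠ 0 := by linarith [gammaV_pos h]
  rw [div_mul_eq_mul_div, gammaV_sq_mul_sum_sq h, div_eq_iff (mul_ne_zero hc hγ)]
  ring

lemma sum_sq_lt_and_gammaV_inv_smul_eq {γ : ℝ} {w : Fin 3 → ℝ} (hc : 0 < c) (hγ : 1 ≤ γ)
    (hw : ∑ i, w i ^ 2 = c ^ 2 * (γ ^ 2 - 1)) :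
    ∑ i, (γ⁻¹ • w) i ^ 2 < c ^ 2 ∧ gammaV c (γ⁻¹ • w) = γ := by
  have hγ₀ : 0 < γ := by linarith
  have hV : ∑ i, (γ⁻¹ • w) i ^ 2 = c ^ 2 - c ^ 2 * γ⁻¹ ^ 2 := by
    simp only [Pi.smul_apply, smul_eq_mul, mul_pow, ← Finset.mul_sum, hw]
    field_simp
  have hc₂ : 0 < c ^ 2 * γ⁻¹ ^ 2 := by positivity
  refine ⟨by linarith, ?_⟩
  have : 1 - (∑ i, (γ⁻¹ • w) i ^ 2) / c ^ 2 = γ⁻¹ ^ 2 := by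
    rw [hV]
    field_simp
    ring
  rw [gammaV, this, Real.sqrt_sq (inv_nonneg.2 hγ₀.le), one_div, inv_inv]

lemma Bc_transpose : (Bc c V)ᵀ = Bc c V := by
  simp [Bc, transpose_vecMulVec]

lemma Bc_mulVec_self (h : ∑ i, V i ^ 2 < c ^ 2) : Bc c V *ᵥ V = gammaV c V • V := by
  rw [Bc, add_mulVec, one_mulVec, smul_mulVec, vecMulVec_mulVec, op_smul_eq_smul, smul_smul,
    dotProduct_self_eq_sum_sq, boost_coeff_mul_sum_sq h]
  module

lemma vecMul_Bc_self (h : ∑ i, V i ^ 2 < c ^ 2) : V ᵥ* Bc c V = gammaV c V • V := by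
  rw [← mulVec_transpose, Bc_transpose, Bc_mulVec_self h]

lemma Bc_mul_self (h : ∑ i, V i ^ 2 < c ^ 2) :
    Bc c V * Bc c V = 1 + (gammaV c V ^ 2 / c ^ 2) • vecMulVec V V := by
  have hc := (sq_pos_of_sum_sq_lt h).ne'
  have hγ : gammaV c V + 1 ≠ 0 := by linarith [gammaV_pos h]
  rw [Bc, one_add_smul_vecMulVec_mul_one_add_smul_vecMulVec, dotProduct_self_eq_sum_sq,
    mul_assoc, boost_coeff_mul_sum_sq h]
  congr 2
  field_simp
  ring

lemma det_Bc (h : ∑ i, V i ^ 2 < c ^ 2) : (Bc c V).det = gammaV c V := by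
  rw [Bc, det_one_add_smul_vecMulVec, dotProduct_self_eq_sum_sq, boost_coeff_mul_sum_sq h]
  ring

lemma vecMul_inv_Bc_self (h : ∑ i, V i ^ 2 < c ^ 2) :
    V ᵥ* (Bc c V)⁻¹ = (gammaV c V)⁻¹ • V := by
  have hB : IsUnit (Bc c V).det := by
    rw [det_Bc h]; exact (gammaV_pos h).ne'.isUnit
  calc V ᵥ* (Bc c V)⁻¹ = (gammaV c V)⁻¹ • ((gammaV c V • V) ᵥ* (Bc c V)⁻¹) := by
        rw [smul_vecMul, smul_smul, inv_mul_cancel₀ (gammaV_pos h).ne', one_smul]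
    _ = (gammaV c V)⁻¹ • V := by
        rw [← vecMul_Bc_self h, vecMul_vecMul, mul_nonsing_inv _ hB, vecMul_one]

end Boost

section Minkowski
variable {c : ℝ}

lemma mul_Gc_mul_transpose_apply (N : Matrix (Fin 1 ⊕ Fin 3) (Fin 1 ⊕ Fin 3) ℝ) (a b) :
    (N * Gc c * Nᵀ) a b =
      -(N a (Sum.inl 0) * N b (Sum.inl 0)) / c ^ 2 + ∑ j, N a (Sum.inr j) * N b (Sum.inr j) := by
  simp [Gc, mul_apply, Fintype.sum_sum_type, one_apply]
  ring

lemma Gc_mul_Gc_inv (hc : c ≠ 0) :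
    Gc c * fromBlocks (of fun _ _ => -c ^ 2) 0 0 1 = 1 := by
  rw [Gc, fromBlocks_multiply, ← fromBlocks_one]
  congr 1
  · ext i j; simp [mul_apply, hc, Subsingleton.elim i j, one_apply]
  all_goals simp

lemma Gc_inv (hc : c ≠ 0) : (Gc c)⁻¹ = fromBlocks (of fun _ _ => -c ^ 2) 0 0 1 :=
  inv_eq_right_inv (Gc_mul_Gc_inv hc)

lemma transpose_mul_Gc_inv_mul_apply (hc : c ≠ 0) (N : Matrix (Fin 1 ⊕ Fin 3) (Fin 1 ⊕ Fin 3) ℝ)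
    (a b) : (Nᵀ * (Gc c)⁻¹ * N) a b =
      -c ^ 2 * (N (Sum.inl 0) a * N (Sum.inl 0) b) + ∑ i, N (Sum.inr i) a * N (Sum.inr i) b := by
  simp [Gc_inv hc, mul_apply, Fintype.sum_sum_type, one_apply]
  ring

lemma fromBlocks_one_mul_Gc_mul_transpose {Q : Matrix (Fin 3) (Fin 3) ℝ} (hQ : Q * Qᵀ = 1) :
    fromBlocks 1 0 0 Q * Gc c * (fromBlocks 1 0 0 Q)ᵀ = Gc c := by
  simp [Gc, fromBlocks_transpose, fromBlocks_multiply, hQ]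

end Minkowski

section LorentzMatrix
variable {c : ℝ} {V : Fin 3 → ℝ}

lemma Lc_eq_Lc_one_mul (Q : Matrix (Fin 3) (Fin 3) ℝ) :
    Lc c V Q = Lc c V 1 * fromBlocks 1 0 0 Q := by
  simp only [Lc, fromBlocks_multiply, vecMul_one, Matrix.mul_one, Matrix.mul_zero, add_zero,
    zero_add]
  congr 1
  ext i j
  simp [mul_apply, vecMul, dotProduct, Finset.mul_sum, mul_assoc]

lemma Lc_one_mul_Gc_mul_transpose (h : ∑ i, V i ^ 2 < c ^ 2) :
    Lc c V 1 * Gc c * (Lc c V 1)ᵀ = Gc c := by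
  have hc := ne_zero_of_sum_sq_lt h
  ext (a | i) (b | j) <;> rw [mul_Gc_mul_transpose_apply] <;>
    simp only [Lc, Gc, fromBlocks_apply₁₁, fromBlocks_apply₁₂,
      fromBlocks_apply₂₁, fromBlocks_apply₂₂, of_apply, vecMul_one, Matrix.mul_one,
      Matrix.zero_apply]
  · rw [show ∑ x, gammaV c V / c ^ 2 * V x * (gammaV c V / c ^ 2 * V x) =
        (gammaV c V / c ^ 2) ^ 2 * ∑ x, V x ^ 2 by rw [Finset.mul_sum]; congr! 1; ring]
    field_simp
    linear_combination gammaV_sq_mul_sum_sq h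
  · have hBV : ∑ x, Bc c V j x * V x = gammaV c V * V j := congrFun (Bc_mulVec_self h) j
    simp only [mul_assoc, ← Finset.mul_sum, mul_comm (V _), hBV]
    field_simp
    ring
  · have hBV : ∑ x, Bc c V i x * V x = gammaV c V * V i := congrFun (Bc_mulVec_self h) i
    simp only [mul_left_comm _ (gammaV c V / c ^ 2), ← Finset.mul_sum, hBV]
    field_simp
    ring
  · have hBB : ∑ x, Bc c V i x * Bc c V j x = (Bc c V * (Bc c V)ᵀ) i j := rfl
    rw [hBB, Bc_transpose, Bc_mul_self h]
    simp [vecMulVec_apply]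
    field_simp
    ring

lemma det_Lc_one (h : ∑ i, V i ^ 2 < c ^ 2) : (Lc c V 1).det = 1 := by
  rw [Lc, det_fromBlocks_of_const₁₁ (gammaV_pos h).ne']
  have hS : Bc c V * 1 - (gammaV c V)⁻¹ • vecMulVec (fun i => gammaV c V * V i)
      (fun j => gammaV c V / c ^ 2 * (V ᵥ* 1) j) =
      1 + (gammaV c V ^ 2 / (c ^ 2 * (gammaV c V + 1)) - gammaV c V / c ^ 2) • vecMulVec V V := by
    ext i j
    have hc := ne_zero_of_sum_sq_lt h
    have hγ := (gammaV_pos h).ne'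
    have hγ₁ : gammaV c V + 1 ≠ 0 := by linarith [gammaV_pos h]
    simp [Bc, vecMulVec_apply]
    field_simp
    ring
  rw [hS, det_one_add_smul_vecMulVec, dotProduct_self_eq_sum_sq, sub_mul,
    boost_coeff_mul_sum_sq h]
  linear_combination gammaV_sq_mul h

lemma Lc_mul_Gc_mul_transpose (h : ∑ i, V i ^ 2 < c ^ 2) {Q : Matrix (Fin 3) (Fin 3) ℝ}
    (hQ : Q * Qᵀ = 1) : Lc c V Q * Gc c * (Lc c V Q)ᵀ = Gc c := by
  rw [Lc_eq_Lc_one_mul, transpose_mul]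
  calc Lc c V 1 * fromBlocks 1 0 0 Q * Gc c * ((fromBlocks 1 0 0 Q)ᵀ * (Lc c V 1)ᵀ)
      = Lc c V 1 * (fromBlocks 1 0 0 Q * Gc c * (fromBlocks 1 0 0 Q)ᵀ) * (Lc c V 1)ᵀ := by
        simp only [Matrix.mul_assoc]
    _ = Gc c := by
        rw [fromBlocks_one_mul_Gc_mul_transpose hQ, Lc_one_mul_Gc_mul_transpose h]

lemma det_Lc (h : ∑ i, V i ^ 2 < c ^ 2) (Q : Matrix (Fin 3) (Fin 3) ℝ) :
    (Lc c V Q).det = Q.det := by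
  rw [Lc_eq_Lc_one_mul, det_mul, det_Lc_one h, det_fromBlocks_zero₂₁, det_one, one_mul, one_mul]

end LorentzMatrix

section LorentzConditions
variable {c : ℝ} {M : Matrix (Fin 1 ⊕ Fin 3) (Fin 1 ⊕ Fin 3) ℝ}

lemma sum_sq_col_eq_of_transpose_mul_Gc_inv_mul (hc : c ≠ 0)
    (hM : Mᵀ * (Gc c)⁻¹ * M = (Gc c)⁻¹) :
    ∑ i, M (Sum.inr i) (Sum.inl 0) ^ 2 = c ^ 2 * (M (Sum.inl 0) (Sum.inl 0) ^ 2 - 1) := by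
  have := congrFun (congrFun hM (Sum.inl 0)) (Sum.inl 0)
  rw [transpose_mul_Gc_inv_mul_apply hc, Gc_inv hc] at this
  simp only [fromBlocks_apply₁₁, of_apply, ← sq] at this
  linear_combination this

lemma row_mul_eq_of_transpose_mul_Gc_inv_mul (hc : c ≠ 0)
    (hM : Mᵀ * (Gc c)⁻¹ * M = (Gc c)⁻¹) (j : Fin 3) :
    c ^ 2 * M (Sum.inl 0) (Sum.inl 0) * M (Sum.inl 0) (Sum.inr j) =
      ∑ i, M (Sum.inr i) (Sum.inl 0) * M (Sum.inr i) (Sum.inr j) := by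
  have := congrFun (congrFun hM (Sum.inl 0)) (Sum.inr j)
  rw [transpose_mul_Gc_inv_mul_apply hc, Gc_inv hc] at this
  simp only [fromBlocks_apply₁₂, Matrix.zero_apply] at this
  linear_combination -this

lemma toBlocks₂₂_mul_transpose_of_mul_Gc_mul_transpose (hM : M * Gc c * Mᵀ = Gc c) :
    M.toBlocks₂₂ * M.toBlocks₂₂ᵀ =
      1 + (c ^ 2)⁻¹ • vecMulVec (fun i => M (Sum.inr i) (Sum.inl 0))
        (fun i => M (Sum.inr i) (Sum.inl 0)) := by
  ext i j
  have := congrFun (congrFun hM (Sum.inr i)) (Sum.inr j)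
  rw [mul_Gc_mul_transpose_apply] at this
  simp only [Gc, fromBlocks_apply₂₂] at this
  simp only [mul_apply, toBlocks₂₂, transpose_apply, of_apply, Matrix.add_apply,
    Matrix.smul_apply, vecMulVec_apply, smul_eq_mul]
  linear_combination this

theorem exists_eq_Lc_of_mul_Gc_mul_transpose_eq (hc : 0 < c) (hM : M * Gc c * Mᵀ = Gc c)
    (h₀₀ : 0 ≤ M (Sum.inl 0) (Sum.inl 0)) :
    ∃ (V : Fin 3 → ℝ) (Q : Matrix (Fin 3) (Fin 3) ℝ),
      ∑ i, V i ^ 2 < c ^ 2 ∧ Q * Qᵀ = 1 ∧ M = Lc c V Q := by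
  set γ := M (Sum.inl 0) (Sum.inl 0) with hγ_def
  set w : Fin 3 → ℝ := fun i => M (Sum.inr i) (Sum.inl 0)
  set A := M.toBlocks₂₂
  have hM' := transpose_mul_inv_mul_eq_inv
    (isUnit_det_of_right_inverse (Gc_mul_Gc_inv hc.ne')) hM
  have hw := sum_sq_col_eq_of_transpose_mul_Gc_inv_mul hc.ne' hM'
  have hγ : 1 ≤ γ := by
    have : 0 ≤ c ^ 2 * (γ ^ 2 - 1) := hw ▸ by positivity
    have : 1 ≤ γ ^ 2 := by nlinarith [nonneg_of_mul_nonneg_right this (by positivity)]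
    nlinarith
  obtain ⟨hV, hγV⟩ := sum_sq_lt_and_gammaV_inv_smul_eq hc hγ hw
  set V := γ⁻¹ • w
  have hA : A * Aᵀ = Bc c V * Bc c V := by
    rw [Bc_mul_self hV, hγV, toBlocks₂₂_mul_transpose_of_mul_Gc_mul_transpose hM]
    have hγ₀ : γ ≠ 0 := by positivity
    ext i j
    simp only [V, w, Matrix.add_apply, Matrix.smul_apply, vecMulVec_apply, Pi.smul_apply,
      smul_eq_mul]
    field_simp
  have hB : IsUnit (Bc c V).det := by
    rw [det_Bc hV]
    exact (gammaV_pos hV).ne'.isUnit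
  refine ⟨V, (Bc c V)⁻¹ * A, hV, inv_mul_mul_transpose_eq_one Bc_transpose hB hA, ?_⟩
  ext (a | i) (b | j)
  · simp [Lc, hγV, γ, Fin.fin_one_eq_zero]
  · obtain rfl := Fin.fin_one_eq_zero a
    have hVA :
        (V ᵥ* A) j = γ⁻¹ * ∑ i, M (Sum.inr i) (Sum.inl 0) * M (Sum.inr i) (Sum.inr j) := by
      simp [vecMul, dotProduct, V, w, A, toBlocks₂₂, Finset.mul_sum, mul_assoc]
    have hrow := row_mul_eq_of_transpose_mul_Gc_inv_mul hc.ne' hM' j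
    rw [← hγ_def] at hrow
    simp only [Lc, fromBlocks_apply₁₂, of_apply, ← vecMul_vecMul, vecMul_inv_Bc_self hV, hγV,
      smul_vecMul, Pi.smul_apply, smul_eq_mul, hVA]
    field_simp
    linear_combination hrow
  · obtain rfl := Fin.fin_one_eq_zero b
    simp [Lc, hγV, V, w]
    field_simp
  · simp [Lc, mul_nonsing_inv_cancel_left _ _ hB, A]
    rfl

end LorentzConditions

theorem stmt6 (c : ℝ) (hc : 0 < c)
    (M : Matrix (Fin 1 ⊕ Fin 3) (Fin 1 ⊕ Fin 3) ℝ) :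
    (M * Gc c * Mᵀ = Gc c ∧ 0 ≤ M (Sum.inl 0) (Sum.inl 0) ∧ 0 < M.det)
    ↔ ∃ (V : Fin 3 → ℝ) (Q : Matrix (Fin 3) (Fin 3) ℝ),
        Real.sqrt (∑ i, V i ^ 2) < c ∧ Qᵀ * Q = 1 ∧ Q.det = 1 ∧
        M = Lc c V Q := by
  constructor
  · rintro ⟨hM, h₀₀, hdet⟩
    obtain ⟨V, Q, hV, hQ, rfl⟩ := exists_eq_Lc_of_mul_Gc_mul_transpose_eq hc hM h₀₀
    rw [det_Lc hV] at hdet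
    have hQ_sq : Q.det * Q.det = 1 := by
      simpa only [det_mul, det_transpose, det_one] using congrArg det hQ
    refine ⟨V, Q, (Real.sqrt_lt' hc).2 hV, mul_eq_one_comm.1 hQ, ?_, rfl⟩
    nlinarith
  · rintro ⟨V, Q, hV, hQ, hQ_det, rfl⟩
    replace hV := (Real.sqrt_lt' hc).1 hV
    exact ⟨Lc_mul_Gc_mul_transpose hV (mul_eq_one_comm.1 hQ), (gammaV_pos hV).le,
      by rw [det_Lc hV, hQ_det]; exact one_pos⟩
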